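/- arXiv:1302.3926 — 2 statements merged into one kernel-verified Lean document; each statement's English description precedes it below -/
import Mathlib

section
/- Let X be a smooth projective surface with χ(O_X) = 2, K_X = E, Ĉ an irreducible curve with Ĉ² = 0, Ĉ·E = 2, E² = −1, and suppose h⁰(O_X(aĈ)) = 1 for all a ≥ 0 and all higher cohomology of aĈ+bE vanishes for 2a > b > 0. Then h⁰(O_X(aĈ + E)) = a + 2 for all a ≥ 1, and consequently the multiplication map H⁰(O_X(Ĉ)) ⊗ H⁰(O_X((a−1)Ĉ + E)) → H⁰(O_X(aĈ + E)) is not surjective for any a ≥ 2. -/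
/-!
For `D = aĈ + E` we have `D - K = aĈ`, so `D·(D - K) = a²Ĉ² + a Ĉ·E = 2a`, and with the vanishing
of `h¹` and `h²` Riemann–Roch reads `2 h⁰(D) = 2a + 4`. Hence `h⁰((a-1)Ĉ + E) = a + 1`, while
`h⁰(Ĉ) = 1`: the source of the multiplication map has dimension `a + 1 < a + 2`.
-/

open Module TensorProduct

theorem not_surjective_lift_of_finrank_mul_lt {𝕜 M N P : Type*} [Field 𝕜]
    [AddCommGroup M] [Module 𝕜 M] [FiniteDimensional 𝕜 M]
    [AddCommGroup N] [Module 𝕜 N] [FiniteDimensional 𝕜 N]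
    [AddCommGroup P] [Module 𝕜 P]
    (μ : M →ₗ[𝕜] N →ₗ[𝕜] P) (h : finrank 𝕜 M * finrank 𝕜 N < finrank 𝕜 P) :
    ¬ Function.Surjective (lift μ) := fun hsurj =>
  (LinearMap.finrank_le_finrank_of_surjective hsurj).not_gt (by rwa [finrank_tensorProduct])

theorem bilin_smul_add_apply_smul {Div : Type*} [AddCommGroup Div]
    (B : Div →ₗ[ℤ] Div →ₗ[ℤ] ℤ) (hsymm : ∀ x y : Div, B x y = B y x) (a : ℤ) (C E : Div) :
    B (a • C + E) (a • C) = a ^ 2 * B C C + a * B C E := by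
  simp only [map_add, map_zsmul, LinearMap.add_apply, LinearMap.smul_apply, smul_eq_mul,
    hsymm E C]
  ring

theorem finrank_smul_add_eq {𝕜 : Type*} [Field 𝕜] {Div : Type*} [AddCommGroup Div]
    (inter : Div →ₗ[ℤ] Div →ₗ[ℤ] ℤ) (hsymm : ∀ x y : Div, inter x y = inter y x)
    (E Chat : Div) (V : Div → Type*) [∀ D, AddCommGroup (V D)] [∀ D, Module 𝕜 (V D)]
    (h1 h2 : Div → ℕ)
    (hRR : ∀ D : Div,
      2 * ((finrank 𝕜 (V D) : ℤ) - (h1 D : ℤ) + (h2 D : ℤ)) = inter D (D - E) + 4)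
    (hCC : inter Chat Chat = 0) (hCE : inter Chat E = 2)
    (hvanish : ∀ a : ℤ, 1 ≤ a → h1 (a • Chat + E) = 0 ∧ h2 (a • Chat + E) = 0)
    (a : ℤ) (ha : 1 ≤ a) :
    (finrank 𝕜 (V (a • Chat + E)) : ℤ) = a + 2 := by
  have hRRa := hRR (a • Chat + E)
  rw [add_sub_cancel_right, bilin_smul_add_apply_smul inter hsymm, hCC, hCE,
    (hvanish a ha).1, (hvanish a ha).2] at hRRa
  push_cast at hRRa
  linarith

theorem stmt12_general (𝕜 : Type*) [Field 𝕜] (Div : Type*) [AddCommGroup Div]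
    (inter : Div →ₗ[ℤ] Div →ₗ[ℤ] ℤ)
    (hsymm : ∀ x y : Div, inter x y = inter y x)
    (K E Chat : Div)
    (V : Div → Type*) [∀ D, AddCommGroup (V D)] [∀ D, Module 𝕜 (V D)]
    [∀ D, FiniteDimensional 𝕜 (V D)]
    (h1 h2 : Div → ℕ)
    (hRR : ∀ D : Div,
      2 * ((finrank 𝕜 (V D) : ℤ) - (h1 D : ℤ) + (h2 D : ℤ)) = inter D (D - K) + 4)
    (hK : K = E)
    (hCC : inter Chat Chat = 0) (hCE : inter Chat E = 2)
    (hvanish : ∀ a b : ℤ, 2 * a > b → b > 0 →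
      h1 (a • Chat + b • E) = 0 ∧ h2 (a • Chat + b • E) = 0)
    (h0C : ∀ a : ℕ, finrank 𝕜 (V (a • Chat)) = 1) :
    (∀ a : ℤ, 1 ≤ a → (finrank 𝕜 (V (a • Chat + E)) : ℤ) = a + 2) ∧
    (∀ a : ℤ, 2 ≤ a →
      ∀ μ : V Chat →ₗ[𝕜] V ((a - 1) • Chat + E) →ₗ[𝕜] V (a • Chat + E),
        ¬ Function.Surjective (TensorProduct.lift μ)) := by
  subst K
  have h0 := finrank_smul_add_eq inter hsymm E Chat V h1 h2 hRR hCC hCE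
    (fun a ha => by simpa using hvanish a 1 (by omega) one_pos)
  refine ⟨h0, fun a ha μ => not_surjective_lift_of_finrank_mul_lt μ ?_⟩
  have h0C1 : finrank 𝕜 (V Chat) = 1 := by rw [← one_smul ℕ Chat]; exact h0C 1
  have h0prev := h0 (a - 1) (by omega)
  have h0a := h0 a (by omega)
  rw [h0C1, one_mul]
  omega

/-- On a smooth projective surface with `χ(O_X) = 2`, `K_X = E`, `Ĉ² = 0`, `Ĉ·E = 2`,
`E² = −1`, with `h⁰(aĈ) = 1` for all `a ≥ 0` and vanishing higher cohomology of
`aĈ + bE` for `2a > b > 0` (sections are modelled by finite-dimensional vector spaces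
`V D` with `h⁰(D) = dim V D`, together with Riemann–Roch):
`h⁰(aĈ + E) = a + 2` for all `a ≥ 1`, and the multiplication map
`H⁰(Ĉ) ⊗ H⁰((a−1)Ĉ + E) → H⁰(aĈ + E)` is not surjective for `a ≥ 2`. -/
theorem stmt12 (𝕜 : Type*) [Field 𝕜] (Div : Type*) [AddCommGroup Div]
    (inter : Div →ₗ[ℤ] Div →ₗ[ℤ] ℤ)
    (hsymm : ∀ x y : Div, inter x y = inter y x)
    (K E Chat : Div)
    (V : Div → Type*) [∀ D, AddCommGroup (V D)] [∀ D, Module 𝕜 (V D)]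
    [∀ D, FiniteDimensional 𝕜 (V D)]
    (h1 h2 : Div → ℕ)
    (hRR : ∀ D : Div,
      2 * ((finrank 𝕜 (V D) : ℤ) - (h1 D : ℤ) + (h2 D : ℤ)) = inter D (D - K) + 4)
    (hK : K = E)
    (hCC : inter Chat Chat = 0) (hCE : inter Chat E = 2) (hEE : inter E E = -1)
    (hvanish : ∀ a b : ℤ, 2 * a > b → b > 0 →
      h1 (a • Chat + b • E) = 0 ∧ h2 (a • Chat + b • E) = 0)
    (h0C : ∀ a : ℕ, finrank 𝕜 (V (a • Chat)) = 1) :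
    (∀ a : ℤ, 1 ≤ a → (finrank 𝕜 (V (a • Chat + E)) : ℤ) = a + 2) ∧
    (∀ a : ℤ, 2 ≤ a →
      ∀ μ : V Chat →ₗ[𝕜] V ((a - 1) • Chat + E) →ₗ[𝕜] V (a • Chat + E),
        ¬ Function.Surjective (TensorProduct.lift μ)) :=
  stmt12_general 𝕜 Div inter hsymm K E Chat V h1 h2 hRR hK hCC hCE hvanish h0C
end

section
/- The nef cone lattice monoid of the blow-up P₃ of ℙ² at 3 general points, namely {a₀H − ∑_{i=1}^3 aᵢEᵢ : aᵢ ∈ ℤ_{≥0}, a₀ ≥ aᵢ + a_j for all 1 ≤ i ≠ j ≤ 3}, equals the union of the two submonoids generated respectively by {H, H−E₁, H−E₂, H−E₃} and by {2H−E₁−E₂−E₃, H−E₁, H−E₂, H−E₃}, whose intersection is the submonoid generated by {H−E₁, H−E₂, H−E₃}. -/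
/-!
The generators of each of the three submonoids are part of a `ℤ`-basis of `ℤ⁴`, so each submonoid
consists of the classes with nonnegative coordinates in that basis. For `a₀H − ∑ aᵢEᵢ` this reads:
`aᵢ ≥ 0` and `a₀ ≥ a₁ + a₂ + a₃` when `H` is added to the `H − Eᵢ`; `aᵢ ≥ 0`,
`a₀ ≤ a₁ + a₂ + a₃` and `a₀ ≥ aᵢ + aⱼ` when `2H − E₁ − E₂ − E₃` is added; `aᵢ ≥ 0` and
`a₀ = a₁ + a₂ + a₃` for the `H − Eᵢ` alone. A nef class therefore lies in the first or the
second submonoid according to the sign of `a₀ − a₁ − a₂ − a₃`, and in both exactly when it vanishes.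
-/

/-- Standard basis of `Pic(P₃) ≅ ℤ⁴` with coordinates in the basis `H, E₁, E₂, E₃`. -/
def basisVec (i : Fin 4) : Fin 4 → ℤ := fun j => if j = i then 1 else 0

/-- The nef lattice monoid of `P₃`, the blow-up of `ℙ²` at three general points:
classes `a₀H − a₁E₁ − a₂E₂ − a₃E₃` with all `aᵢ ≥ 0` and `a₀ ≥ aᵢ + aⱼ` for
`1 ≤ i ≠ j ≤ 3` (a class `x` has `x 0 = a₀`, `x i = −aᵢ` for `i ≥ 1`). -/
def nefP3 : Set (Fin 4 → ℤ) :=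
  {x | 0 ≤ x 0 ∧ (∀ i : Fin 4, i ≠ 0 → x i ≤ 0) ∧
    ∀ i j : Fin 4, i ≠ 0 → j ≠ 0 → i ≠ j → -(x i) + -(x j) ≤ x 0}

open AddSubmonoid

-- `H` is the class of a line, `H − Eᵢ` the pencil of lines through the `i`-th point and
-- `2H − E₁ − E₂ − E₃` the net of conics through all three points.
def lineMonoid : AddSubmonoid (Fin 4 → ℤ) :=
  closure {basisVec 0, basisVec 0 - basisVec 1, basisVec 0 - basisVec 2, basisVec 0 - basisVec 3}

def conicMonoid : AddSubmonoid (Fin 4 → ℤ) :=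
  closure {2 • basisVec 0 - basisVec 1 - basisVec 2 - basisVec 3,
    basisVec 0 - basisVec 1, basisVec 0 - basisVec 2, basisVec 0 - basisVec 3}

def pencilMonoid : AddSubmonoid (Fin 4 → ℤ) :=
  closure {basisVec 0 - basisVec 1, basisVec 0 - basisVec 2, basisVec 0 - basisVec 3}

lemma mem_nefP3_iff (x : Fin 4 → ℤ) :
    x ∈ nefP3 ↔ 0 ≤ x 0 ∧ x 1 ≤ 0 ∧ x 2 ≤ 0 ∧ x 3 ≤ 0 ∧
      0 ≤ x 0 + x 1 + x 2 ∧ 0 ≤ x 0 + x 1 + x 3 ∧ 0 ≤ x 0 + x 2 + x 3 := by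
  simp [nefP3, Fin.forall_fin_succ]
  omega

lemma mem_lineMonoid_iff (x : Fin 4 → ℤ) :
    x ∈ lineMonoid ↔ x 1 ≤ 0 ∧ x 2 ≤ 0 ∧ x 3 ≤ 0 ∧ 0 ≤ x 0 + x 1 + x 2 + x 3 := by
  rw [lineMonoid]
  constructor
  · intro hx
    induction hx using closure_induction with
    | mem y hy => rcases hy with rfl | rfl | rfl | rfl <;> decide
    | zero => decide
    | add a b _ _ ha hb => simp only [Pi.add_apply]; omega
  · rintro ⟨h1, h2, h3, h0⟩
    have hdecomp : (x 0 + x 1 + x 2 + x 3).toNat • basisVec 0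
        + (-x 1).toNat • (basisVec 0 - basisVec 1)
        + (-x 2).toNat • (basisVec 0 - basisVec 2)
        + (-x 3).toNat • (basisVec 0 - basisVec 3) = x := by
      ext i; fin_cases i <;> simp [basisVec] <;> omega
    rw [← hdecomp]
    refine add_mem (add_mem (add_mem ?_ ?_) ?_) ?_ <;>
      exact nsmul_mem (AddSubmonoid.subset_closure (by simp)) _

lemma mem_conicMonoid_iff (x : Fin 4 → ℤ) :
    x ∈ conicMonoid ↔ x 1 ≤ 0 ∧ x 2 ≤ 0 ∧ x 3 ≤ 0 ∧ x 0 + x 1 + x 2 + x 3 ≤ 0 ∧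
      0 ≤ x 0 + x 1 + x 2 ∧ 0 ≤ x 0 + x 1 + x 3 ∧ 0 ≤ x 0 + x 2 + x 3 := by
  rw [conicMonoid]
  constructor
  · intro hx
    induction hx using closure_induction with
    | mem y hy => rcases hy with rfl | rfl | rfl | rfl <;> decide
    | zero => decide
    | add a b _ _ ha hb => simp only [Pi.add_apply]; omega
  · rintro ⟨h1, h2, h3, hs, h12, h13, h23⟩
    have hdecomp : (-(x 0 + x 1 + x 2 + x 3)).toNat •
          (2 • basisVec 0 - basisVec 1 - basisVec 2 - basisVec 3)
        + (x 0 + x 2 + x 3).toNat • (basisVec 0 - basisVec 1)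
        + (x 0 + x 1 + x 3).toNat • (basisVec 0 - basisVec 2)
        + (x 0 + x 1 + x 2).toNat • (basisVec 0 - basisVec 3) = x := by
      ext i; fin_cases i <;> simp [basisVec] <;> omega
    rw [← hdecomp]
    refine add_mem (add_mem (add_mem ?_ ?_) ?_) ?_ <;>
      exact nsmul_mem (AddSubmonoid.subset_closure (by simp)) _

lemma mem_pencilMonoid_iff (x : Fin 4 → ℤ) :
    x ∈ pencilMonoid ↔ x 1 ≤ 0 ∧ x 2 ≤ 0 ∧ x 3 ≤ 0 ∧ x 0 + x 1 + x 2 + x 3 = 0 := by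
  rw [pencilMonoid]
  constructor
  · intro hx
    induction hx using closure_induction with
    | mem y hy => rcases hy with rfl | rfl | rfl <;> decide
    | zero => decide
    | add a b _ _ ha hb => simp only [Pi.add_apply]; omega
  · rintro ⟨h1, h2, h3, hs⟩
    have hdecomp : (-x 1).toNat • (basisVec 0 - basisVec 1)
        + (-x 2).toNat • (basisVec 0 - basisVec 2)
        + (-x 3).toNat • (basisVec 0 - basisVec 3) = x := by
      ext i; fin_cases i <;> simp [basisVec] <;> omega
    rw [← hdecomp]
    refine add_mem (add_mem ?_ ?_) ?_ <;>
      exact nsmul_mem (AddSubmonoid.subset_closure (by simp)) _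

/-- The nef lattice monoid of `P₃` equals the union of the submonoids generated by
`{H, H−E₁, H−E₂, H−E₃}` and by `{2H−E₁−E₂−E₃, H−E₁, H−E₂, H−E₃}` respectively, and
the intersection of the two submonoids is the submonoid generated by
`{H−E₁, H−E₂, H−E₃}`. -/
theorem stmt17 :
    nefP3 =
      (AddSubmonoid.closure {basisVec 0, basisVec 0 - basisVec 1,
          basisVec 0 - basisVec 2, basisVec 0 - basisVec 3} : Set (Fin 4 → ℤ)) ∪
      (AddSubmonoid.closure {2 • basisVec 0 - basisVec 1 - basisVec 2 - basisVec 3,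
          basisVec 0 - basisVec 1, basisVec 0 - basisVec 2,
          basisVec 0 - basisVec 3} : Set (Fin 4 → ℤ)) ∧
    AddSubmonoid.closure {basisVec 0, basisVec 0 - basisVec 1,
          basisVec 0 - basisVec 2, basisVec 0 - basisVec 3} ⊓
      AddSubmonoid.closure {2 • basisVec 0 - basisVec 1 - basisVec 2 - basisVec 3,
          basisVec 0 - basisVec 1, basisVec 0 - basisVec 2, basisVec 0 - basisVec 3}
      = AddSubmonoid.closure {basisVec 0 - basisVec 1, basisVec 0 - basisVec 2,
          basisVec 0 - basisVec 3} := by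
  change nefP3 = (lineMonoid : Set (Fin 4 → ℤ)) ∪ conicMonoid ∧
    lineMonoid ⊓ conicMonoid = pencilMonoid
  constructor
  · ext x
    simp only [Set.mem_union, SetLike.mem_coe, mem_nefP3_iff, mem_lineMonoid_iff,
      mem_conicMonoid_iff]
    omega
  · ext x
    simp only [mem_inf, mem_lineMonoid_iff, mem_conicMonoid_iff, mem_pencilMonoid_iff]
    omega
end
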